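/- There exists an absolute constant c > 0 such that the following holds: for every ε ∈ (0,1/3), every integer k ≥ 1, every d×k real matrix V with orthonormal columns, and every t ≥ c·k/ε², if R is a d×t random matrix whose entries are i.i.d., each equal to +1/√t or −1/√t with probability 1/2, then with probability at least 0.99, every singular value σ_i(VᵀR), i ∈ [k], of the k×t matrix VᵀR satisfies |1 − σ_i(VᵀR)| ≤ ε. -/

import Mathlib

open MeasureTheory
open scoped Matrix

/-- Frobenius norm of a real matrix. -/
noncomputable def frobNorm {m n : ℕ} (M : Matrix (Fin m) (Fin n) ℝ) : ℝ :=
  Real.sqrt (∑ i, ∑ j, (M i j) ^ 2)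

/-- Spectral (operator) norm of a real matrix, viewed as a linear map between
Euclidean spaces. -/
noncomputable def specNorm {m n : ℕ} (M : Matrix (Fin m) (Fin n) ℝ) : ℝ :=
  ‖LinearMap.toContinuousLinearMap (Matrix.toEuclideanLin M)‖

/-- `P` is the Moore–Penrose pseudoinverse of `M` (the four Penrose conditions;
such a `P` is unique). -/
def IsMoorePenrose {m n : ℕ} (M : Matrix (Fin m) (Fin n) ℝ)
    (P : Matrix (Fin n) (Fin m) ℝ) : Prop :=
  M * P * M = M ∧ P * M * P = P ∧ (M * P)ᵀ = M * P ∧ (P * M)ᵀ = P * M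

/-- `X` is an `n × k` cluster indicator matrix: each row `i` has a single nonzero
entry, in column `f i`, equal to `1/√(z_{f i})` where `z_j` is the number of rows
assigned to column `j`. -/
def IsIndicator {n k : ℕ} (X : Matrix (Fin n) (Fin k) ℝ) : Prop :=
  ∃ f : Fin n → Fin k, ∀ i j, X i j =
    if f i = j then 1 / Real.sqrt ((Finset.univ.filter fun i' => f i' = j).card) else 0

/-- The singular values of a `k × t` real matrix `M` (in some order): the square
roots of the eigenvalues of `M * Mᵀ`. -/
noncomputable def singVals {k t : ℕ} (M : Matrix (Fin k) (Fin t) ℝ) (i : Fin k) : ℝ :=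
  Real.sqrt ((Matrix.isHermitian_mul_conjTranspose_self M).eigenvalues i)

/-- The `d × t` random sign matrix with entries `±1/√t`, as a function of the
sample point `ω` (a `d × t` array of fair coins). -/
noncomputable def signMatrix (d t : ℕ) (ω : Fin d → Fin t → Bool) :
    Matrix (Fin d) (Fin t) ℝ :=
  Matrix.of fun i j => (if ω i j then (1 : ℝ) else -1) / Real.sqrt t

/-- The law of a `d × t` matrix of i.i.d. fair signs: the uniform probability
measure on all `d × t` sign patterns. -/
noncomputable def signMeasure (d t : ℕ) : Measure (Fin d → Fin t → Bool) :=
  (PMF.uniformOfFintype (Fin d → Fin t → Bool)).toMeasure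

/-!
Fix a unit vector `y ∈ ℝᵏ`. The coordinates of `√t · (VᵀR)ᵀ y` are `t` independent Rademacher
sums `Z = ∑ᵢ wᵢ sᵢ` with unit weight vector `w = V y`, so `‖(VᵀR)ᵀ y‖² - 1` is an average of `t`
independent copies of `Z² - 1`. The sub-Gaussian bound `E exp (θ Z) ≤ exp (θ² / 2)` gives
`E Z^{2p} ≤ 2 p! eᵖ`, hence `E exp (η (Z² - 1)) ≤ exp (36 η²)` for `|η| ≤ 1/6`, and Chernoff's
bound gives `|‖(VᵀR)ᵀ y‖² - 1| ≤ ε/2` outside an event of probability `2 exp (-t ε² / 576)`.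
A `1/4`-net of the unit sphere has at most `9ᵏ` points (a volume argument), so for
`t ε² ≥ 6336 k` this holds on the whole net with probability `≥ 0.99`. Controlling the quadratic
form of a symmetric operator on a `1/4`-net controls it on the sphere up to a factor `2`; applied
to `L* L - 1` with `L = (VᵀR)ᵀ` this gives `|‖L y‖² - 1| ≤ ε` for every unit `y`. Finally the
squared singular values of `VᵀR` are values of `‖L y‖²` at unit eigenvectors of `(VᵀR)(VᵀR)ᵀ`.
-/

open Real Finset
open scoped Nat

noncomputable def boolSign (b : Bool) : ℝ := if b then 1 else -1

@[simp] lemma boolSign_true : boolSign true = 1 := rfl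
@[simp] lemma boolSign_false : boolSign false = -1 := rfl

lemma boolSign_mul_self (b : Bool) : boolSign b * boolSign b = 1 := by cases b <;> simp

lemma boolSign_not (b : Bool) : boolSign (!b) = -boolSign b := by cases b <;> simp

section Rademacher

variable {ι : Type*} [Fintype ι] [DecidableEq ι]

noncomputable def rademacherSum (w : ι → ℝ) (v : ι → Bool) : ℝ := ∑ i, w i * boolSign (v i)

theorem sum_exp_mul_rademacherSum_le (w : ι → ℝ) (θ : ℝ) :
    ∑ v : ι → Bool, exp (θ * rademacherSum w v) ≤
      2 ^ Fintype.card ι * exp (θ ^ 2 / 2 * ∑ i, w i ^ 2) := by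
  have hcosh (i : ι) :
      ∑ b : Bool, exp (θ * (w i * boolSign b)) ≤ 2 * exp (θ ^ 2 / 2 * w i ^ 2) := by
    have := cosh_le_exp_half_sq (θ * w i)
    rw [cosh_eq, show (θ * w i) ^ 2 / 2 = θ ^ 2 / 2 * w i ^ 2 by ring] at this
    simp only [Fintype.sum_bool, boolSign_true, boolSign_false, mul_one, mul_neg]
    linarith
  calc ∑ v : ι → Bool, exp (θ * rademacherSum w v)
      = ∏ i, ∑ b : Bool, exp (θ * (w i * boolSign b)) := by
        rw [Fintype.prod_sum]
        simp only [rademacherSum, mul_sum, exp_sum]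
    _ ≤ ∏ i, 2 * exp (θ ^ 2 / 2 * w i ^ 2) :=
        prod_le_prod (fun i _ => by positivity) fun i _ => hcosh i
    _ = 2 ^ Fintype.card ι * exp (θ ^ 2 / 2 * ∑ i, w i ^ 2) := by
        rw [prod_mul_distrib, prod_const, card_univ, ← exp_sum, ← mul_sum]

lemma sum_boolSign_mul_boolSign (i j : ι) :
    ∑ v : ι → Bool, boolSign (v i) * boolSign (v j) =
      if i = j then 2 ^ Fintype.card ι else 0 := by
  split_ifs with hij
  · simp [hij, boolSign_mul_self]
  -- flipping the `i`-th sign is a bijection that negates every summand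
  have := Fintype.sum_equiv
    (Equiv.piCongrRight fun l => if l = i then Equiv.boolNot else Equiv.refl Bool)
    (fun v => boolSign (v i) * boolSign (v j)) (fun v => -(boolSign (v i) * boolSign (v j)))
    fun v => by simp [Ne.symm hij, boolSign_not]
  rw [sum_neg_distrib] at this
  linarith

theorem sum_rademacherSum_sq (w : ι → ℝ) :
    ∑ v : ι → Bool, rademacherSum w v ^ 2 = 2 ^ Fintype.card ι * ∑ i, w i ^ 2 := by
  simp_rw [rademacherSum, sq, sum_mul_sum, sum_comm (γ := ι → Bool)]
  simp_rw [show ∀ i j (v : ι → Bool), w i * boolSign (v i) * (w j * boolSign (v j)) =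
    w i * w j * (boolSign (v i) * boolSign (v j)) from fun _ _ _ => by ring, ← mul_sum,
    sum_boolSign_mul_boolSign]
  simp [mul_sum, mul_comm]

theorem sum_rademacherSum_pow_le {w : ι → ℝ} (hw : ∑ i, w i ^ 2 = 1) (p : ℕ) :
    ∑ v : ι → Bool, rademacherSum w v ^ (2 * p) ≤ 2 ^ (Fintype.card ι + 1) * p ! * exp p := by
  -- compare `(θ Z)^{2p} / (2p)!` with `exp |θ Z|`, then use the MGF bound at `θ = √(2p)`
  set θ := √(2 * p : ℝ)
  have hθ : θ ^ 2 = 2 * p := sq_sqrt (by positivity)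
  have hpoint (v : ι → Bool) : (2 * p : ℝ) ^ p * rademacherSum w v ^ (2 * p) / (2 * p) ! ≤
      exp (θ * rademacherSum w v) + exp (-θ * rademacherSum w v) := by
    have := pow_div_factorial_le_exp _ (abs_nonneg (θ * rademacherSum w v)) (2 * p)
    rw [(even_two_mul p).pow_abs, mul_pow, pow_mul, hθ] at this
    refine this.trans ?_
    rcases abs_cases (θ * rademacherSum w v) with ⟨h, _⟩ | ⟨h, _⟩ <;> rw [h]
    · linarith [exp_pos (-θ * rademacherSum w v)]
    · rw [neg_mul]; linarith [exp_pos (θ * rademacherSum w v)]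
  have hmgf (s : ℝ) (hs : s ^ 2 = 2 * p) :
      ∑ v : ι → Bool, exp (s * rademacherSum w v) ≤ 2 ^ Fintype.card ι * exp p := by
    simpa [hw, hs] using sum_exp_mul_rademacherSum_le w s
  have hfact : ((2 * p) ! : ℝ) ≤ (2 * p : ℝ) ^ p * p ! := by
    have := Nat.factorial_mul_descFactorial (show p ≤ 2 * p by omega)
    rw [show 2 * p - p = p by omega] at this
    rw [← this, mul_comm]
    exact_mod_cast Nat.mul_le_mul_right _ (Nat.descFactorial_le_pow _ _)
  have hsum := sum_le_sum fun v (_ : v ∈ univ) => hpoint v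
  rw [← sum_div, ← mul_sum, sum_add_distrib, div_le_iff₀ (by positivity)] at hsum
  have hpos : (0 : ℝ) < (2 * p : ℝ) ^ p := by
    rcases Nat.eq_zero_or_pos p with rfl | hp
    · simp
    · positivity
  refine le_of_mul_le_mul_left ?_ hpos
  calc (2 * p : ℝ) ^ p * ∑ v : ι → Bool, rademacherSum w v ^ (2 * p)
      ≤ (2 ^ Fintype.card ι * exp p + 2 ^ Fintype.card ι * exp p) * (2 * p) ! :=
        hsum.trans (mul_le_mul_of_nonneg_right
          (add_le_add (hmgf θ hθ) (hmgf (-θ) (by rw [neg_sq, hθ]))) (by positivity))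
    _ ≤ (2 ^ Fintype.card ι * exp p + 2 ^ Fintype.card ι * exp p) * ((2 * p : ℝ) ^ p * p !) :=
        mul_le_mul_of_nonneg_left hfact (by positivity)
    _ = (2 * p : ℝ) ^ p * (2 ^ (Fintype.card ι + 1) * p ! * exp p) := by ring


lemma sum_mul_sq_rademacherSum_pow_div_factorial_le {w : ι → ℝ} (hw : ∑ i, w i ^ 2 = 1) (η : ℝ)
    (n : ℕ) :
    ∑ v : ι → Bool, (η * rademacherSum w v ^ 2) ^ n / n ! ≤
      2 ^ (Fintype.card ι + 1) * (3 * |η|) ^ n := by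
  have he : exp n ≤ 3 ^ n := by
    rw [← exp_one_pow]
    exact pow_le_pow_left₀ (exp_pos 1).le (exp_one_lt_d9.le.trans (by norm_num)) n
  calc ∑ v : ι → Bool, (η * rademacherSum w v ^ 2) ^ n / n !
      ≤ ∑ v : ι → Bool, |η| ^ n * rademacherSum w v ^ (2 * n) / n ! := by
        refine sum_le_sum fun v _ => div_le_div_of_nonneg_right ?_ (by positivity)
        rw [mul_pow, ← pow_mul]
        exact (le_abs_self _).trans (by rw [abs_mul, abs_pow, abs_pow, (even_two_mul n).pow_abs])
    _ = |η| ^ n * (∑ v : ι → Bool, rademacherSum w v ^ (2 * n)) / n ! := by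
        rw [mul_sum, sum_div]
    _ ≤ |η| ^ n * (2 ^ (Fintype.card ι + 1) * n ! * 3 ^ n) / n ! := by
        gcongr
        exact (sum_rademacherSum_pow_le hw n).trans (by gcongr)
    _ = 2 ^ (Fintype.card ι + 1) * (3 * |η|) ^ n := by
        field_simp
        ring

theorem sum_exp_mul_sq_rademacherSum_sub_one_le {w : ι → ℝ} (hw : ∑ i, w i ^ 2 = 1) {η : ℝ}
    (hη : |η| ≤ 1 / 6) :
    ∑ v : ι → Bool, exp (η * (rademacherSum w v ^ 2 - 1)) ≤
      2 ^ Fintype.card ι * exp (36 * η ^ 2) := by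
  set N := Fintype.card ι
  set a : ℕ → ℝ := fun n => ∑ v : ι → Bool, (η * rademacherSum w v ^ 2) ^ n / (n ! : ℝ)
  have ha : HasSum a (∑ v : ι → Bool, exp (η * rademacherSum w v ^ 2)) := hasSum_sum fun v _ => by
    simpa [← Real.exp_eq_exp_ℝ] using
      NormedSpace.expSeries_div_hasSum_exp (η * rademacherSum w v ^ 2)
  have ha₀ : a 0 = 2 ^ N := by simp [a, N]
  have ha₁ : a 1 = η * 2 ^ N := by simp [a, ← mul_sum, sum_rademacherSum_sq, hw, N]
  -- the terms of order `≥ 2` of the exponential series are dominated by a geometric series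
  set r := 3 * |η|
  have hr : r ≤ 1 / 2 := by simp only [r]; linarith
  have htail : ∑ v : ι → Bool, exp (η * rademacherSum w v ^ 2) - (a 0 + a 1) ≤
      2 ^ (N + 1) * r ^ 2 * (1 - r)⁻¹ := by
    have hshift := (hasSum_nat_add_iff' 2).mpr ha
    rw [sum_range_succ, sum_range_one] at hshift
    refine hasSum_le
      (fun n => (sum_mul_sq_rademacherSum_pow_div_factorial_le hw η (n + 2)).trans_eq ?_) hshift
      ((hasSum_geometric_of_lt_one (by positivity) (by linarith)).mul_left (2 ^ (N + 1) * r ^ 2))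
    ring
  have hgeo : 2 ^ (N + 1) * r ^ 2 * (1 - r)⁻¹ ≤ 2 ^ N * (36 * η ^ 2) := by
    have : (1 - r)⁻¹ ≤ 2 := by rw [inv_le_comm₀ (by linarith) (by norm_num)]; linarith
    calc 2 ^ (N + 1) * r ^ 2 * (1 - r)⁻¹ ≤ 2 ^ (N + 1) * r ^ 2 * 2 := by gcongr
      _ = 2 ^ N * (36 * η ^ 2) := by simp only [r, mul_pow, sq_abs]; ring
  calc ∑ v : ι → Bool, exp (η * (rademacherSum w v ^ 2 - 1))
      = exp (-η) * ∑ v : ι → Bool, exp (η * rademacherSum w v ^ 2) := by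
        rw [mul_sum]
        exact sum_congr rfl fun v _ => by rw [← exp_add]; ring_nf
    _ ≤ exp (-η) * (2 ^ N * exp (η + 36 * η ^ 2)) := by
        gcongr
        calc _ ≤ 2 ^ N * (η + 36 * η ^ 2 + 1) := by linarith
          _ ≤ _ := by gcongr; exact add_one_le_exp _
    _ = 2 ^ N * exp (36 * η ^ 2) := by
        rw [mul_left_comm, ← exp_add]; ring_nf

end Rademacher

theorem card_sum_ge_le_of_sum_exp_le {Ω κ : Type*} [Fintype Ω] [Fintype κ] [DecidableEq κ]
    (f : Ω → ℝ) {θ C : ℝ} (hθ : 0 ≤ θ) (hf : ∑ v, exp (θ * f v) ≤ Fintype.card Ω * exp C) (a : ℝ) :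
    (#{ω : κ → Ω | a ≤ ∑ j, f (ω j)} : ℝ) ≤
      Fintype.card Ω ^ Fintype.card κ * exp (Fintype.card κ * C - θ * a) := by
  calc (#{ω : κ → Ω | a ≤ ∑ j, f (ω j)} : ℝ)
      ≤ ∑ ω : κ → Ω, exp (θ * (∑ j, f (ω j) - a)) := by
        rw [card_eq_sum_ones, Nat.cast_sum, Nat.cast_one, sum_filter]
        exact sum_le_sum fun ω _ => by
          split_ifs with h
          · exact one_le_exp (mul_nonneg hθ (sub_nonneg.mpr h))
          · exact (exp_pos _).le
    _ = exp (-(θ * a)) * (∑ v, exp (θ * f v)) ^ Fintype.card κ := by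
        rw [← card_univ, ← prod_const, Fintype.prod_sum, mul_sum]
        refine sum_congr rfl fun ω _ => ?_
        rw [← exp_sum, ← exp_add, mul_sub, mul_sum]
        ring_nf
    _ ≤ exp (-(θ * a)) * (Fintype.card Ω * exp C) ^ Fintype.card κ := by gcongr
    _ = Fintype.card Ω ^ Fintype.card κ * exp (Fintype.card κ * C - θ * a) := by
        rw [mul_pow, ← exp_nat_mul, sub_eq_add_neg, exp_add]
        ring

lemma ofReal_one_sub_le_of_measure_compl_le {Ω : Type*} [MeasurableSpace Ω] {μ : Measure Ω}
    [IsProbabilityMeasure μ] {s : Set Ω} (hs : MeasurableSet s) {q : ℝ} (hq : 0 ≤ q)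
    (h : μ sᶜ ≤ ENNReal.ofReal q) : ENNReal.ofReal (1 - q) ≤ μ s := by
  rw [← compl_compl s, prob_compl_eq_one_sub hs.compl, ENNReal.ofReal_sub _ hq, ENNReal.ofReal_one]
  exact tsub_le_tsub_left h 1

lemma signMeasure_setOf_swap_le {d t : ℕ} (P : (Fin t → Fin d → Bool) → Prop) [DecidablePred P]
    {x : ℝ} (h : (#{η | P η} : ℝ) ≤ (2 ^ d) ^ t * x) :
    signMeasure d t {ω | P (Function.swap ω)} ≤ ENNReal.ofReal x := by
  have hcard : Fintype.card {ω : Fin d → Fin t → Bool | P (Function.swap ω)} = #{η | P η} := by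
    rw [Fintype.card_subtype]
    exact card_equiv (Equiv.piComm _) fun ω => by simp [Equiv.piComm]
  rw [signMeasure, PMF.toMeasure_uniformOfFintype_apply _ (Set.toFinite _).measurableSet, hcard]
  refine ENNReal.div_le_of_le_mul ?_
  have hΩ : (Fintype.card (Fin d → Fin t → Bool) : ENNReal) = ENNReal.ofReal ((2 ^ d) ^ t) := by
    rw [← ENNReal.ofReal_natCast]
    simp [← pow_mul, mul_comm]
  rw [hΩ, ← ENNReal.ofReal_mul' (by positivity), ← ENNReal.ofReal_natCast]
  exact ENNReal.ofReal_le_ofReal (by linarith)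

theorem signMeasure_abs_sum_sq_sub_one_ge_le {d t : ℕ} {w : Fin d → ℝ} (hw : ∑ i, w i ^ 2 = 1)
    {δ : ℝ} (hδ : 0 ≤ δ) (hδ' : δ ≤ 12) :
    signMeasure d t {ω | t * δ ≤ |∑ j, (rademacherSum w (Function.swap ω j) ^ 2 - 1)|} ≤
      ENNReal.ofReal (2 * exp (-(t * δ ^ 2) / 144)) := by
  -- Chernoff's bound with `θ = δ / 72`, the minimizer of `36 θ² - θ δ`
  set θ := δ / 72
  have hside (s : ℝ) (hs : |s| = 1) :
      signMeasure d t {ω | t * δ ≤ s * ∑ j, (rademacherSum w (Function.swap ω j) ^ 2 - 1)} ≤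
        ENNReal.ofReal (exp (-(t * δ ^ 2) / 144)) := by
    have hmgf : ∑ v : Fin d → Bool, exp (θ * (s * (rademacherSum w v ^ 2 - 1))) ≤
        Fintype.card (Fin d → Bool) * exp (36 * (θ * s) ^ 2) := by
      simpa [mul_assoc] using sum_exp_mul_sq_rademacherSum_sub_one_le hw (η := θ * s)
        (by rw [abs_mul, hs, abs_of_nonneg (by positivity)]; simp only [θ]; linarith)
    simp only [mul_sum]
    refine signMeasure_setOf_swap_le _
      ((card_sum_ge_le_of_sum_exp_le _ (by positivity) hmgf (t * δ)).trans_eq ?_)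
    rw [mul_pow, ← abs_sq s, ← sq_abs s, hs]
    simp only [θ, Fintype.card_fun, Fintype.card_bool, Fintype.card_fin]
    push_cast
    ring_nf
  calc signMeasure d t {ω | t * δ ≤ |∑ j, (rademacherSum w (Function.swap ω j) ^ 2 - 1)|}
      ≤ signMeasure d t
          ({ω | t * δ ≤ 1 * ∑ j, (rademacherSum w (Function.swap ω j) ^ 2 - 1)} ∪
            {ω | t * δ ≤ -1 * ∑ j, (rademacherSum w (Function.swap ω j) ^ 2 - 1)}) :=
        measure_mono fun ω hω => by simpa [le_abs] using hω
    _ ≤ ENNReal.ofReal (exp (-(t * δ ^ 2) / 144)) + ENNReal.ofReal (exp (-(t * δ ^ 2) / 144)) :=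
        (measure_union_le _ _).trans (add_le_add (hside 1 (by simp)) (hside (-1) (by simp)))
    _ = ENNReal.ofReal (2 * exp (-(t * δ ^ 2) / 144)) := by
        rw [← ENNReal.ofReal_add (by positivity) (by positivity), two_mul]

section Net

open Metric Module
open scoped NNReal ENNReal

variable {E : Type*} [NormedAddCommGroup E] [NormedSpace ℝ E] [FiniteDimensional ℝ E]

theorem card_le_of_isSeparated {r : ℝ≥0} (hr : 0 < r) {F : Finset E}
    (hF : (F : Set E) ⊆ closedBall 0 1) (hsep : IsSeparated (r : ℝ≥0∞) (F : Set E)) :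
    (#F : ℝ) ≤ (1 + 2 / r) ^ finrank ℝ E := by
  rcases subsingleton_or_nontrivial E with hE | hE
  · simpa [finrank_zero_of_subsingleton] using F.card_le_one_of_subsingleton
  borelize E
  set μ : Measure E := Measure.addHaar
  set n := finrank ℝ E
  have hdisj : (F : Set E).PairwiseDisjoint fun p => ball p (r / 2) := fun p hp q hq hpq =>
    ball_disjoint_ball <| by
      have : (r : ℝ≥0∞) < edist p q := hsep hp hq hpq
      rw [edist_nndist, ENNReal.coe_lt_coe, ← NNReal.coe_lt_coe, coe_nndist] at this
      linarith
  have hsub : (⋃ p ∈ F, ball p (r / 2 : ℝ)) ⊆ ball 0 (1 + r / 2) := by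
    refine Set.iUnion₂_subset fun p hp x hx => ?_
    have := mem_closedBall_zero_iff.mp (hF hp)
    rw [mem_ball, dist_eq_norm] at hx
    rw [mem_ball, dist_zero_right]
    linarith [norm_le_norm_add_norm_sub' x p, norm_sub_rev x p]
  have hvol := (measure_biUnion_finset hdisj fun p _ => measurableSet_ball).symm.trans_le
    (measure_mono (μ := μ) hsub)
  simp only [Measure.addHaar_ball μ _ (by positivity : (0 : ℝ) ≤ r / 2),
    Measure.addHaar_ball μ _ (by positivity : (0 : ℝ) ≤ 1 + r / 2), sum_const, nsmul_eq_mul,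
    ← mul_assoc] at hvol
  have hreal := ENNReal.toReal_mono (by finiteness) <|
    (ENNReal.mul_le_mul_iff_left (measure_ball_pos μ 0 one_pos).ne' measure_ball_lt_top.ne).mp hvol
  rw [ENNReal.toReal_mul, ENNReal.toReal_ofReal (by positivity),
    ENNReal.toReal_ofReal (by positivity), ENNReal.toReal_natCast] at hreal
  calc (#F : ℝ) = #F * (r / 2 : ℝ) ^ n / (r / 2 : ℝ) ^ n := by field_simp
    _ ≤ (1 + r / 2 : ℝ) ^ n / (r / 2 : ℝ) ^ n := by gcongr
    _ = (1 + 2 / r) ^ n := by rw [← div_pow]; congr 1; field_simp; ring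

theorem exists_finset_isCover_sphere {r : ℝ≥0} (hr : 0 < r) :
    ∃ N : Finset E, (N : Set E) ⊆ sphere 0 1 ∧ (#N : ℝ) ≤ (1 + 2 / r) ^ finrank ℝ E ∧
      IsCover r (sphere 0 1) (N : Set E) := by
  have hpack : packingNumber r (sphere (0 : E) 1) ≠ ⊤ := by
    obtain ⟨C, -, hCfin, hC⟩ := exists_finite_isCover_of_isCompact (ε := r / 2) (by positivity)
      (isCompact_sphere (0 : E) 1)
    refine ne_top_of_le_ne_top hCfin.encard_lt_top.ne ?_
    simpa [mul_div_cancel₀] using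
      (packingNumber_two_mul_le_externalCoveringNumber (r / 2) _).trans
        hC.externalCoveringNumber_le_encard
  have hfin : (maximalSeparatedSet r (sphere (0 : E) 1)).Finite :=
    Set.encard_ne_top_iff.mp (by rwa [encard_maximalSeparatedSet hpack])
  refine ⟨hfin.toFinset, by simpa using maximalSeparatedSet_subset, card_le_of_isSeparated hr ?_ ?_,
    by simpa using isCover_maximalSeparatedSet hpack⟩
  · simpa using maximalSeparatedSet_subset.trans sphere_subset_closedBall
  · simpa using isSeparated_maximalSeparatedSet

end Net

section ApproximateIsometry

open Metric ContinuousLinearMap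
open scoped NNReal InnerProductSpace

variable {E F : Type*} [NormedAddCommGroup E] [InnerProductSpace ℝ E]
  [NormedAddCommGroup F] [InnerProductSpace ℝ F]

theorem opNorm_le_of_isCover {T : E →L[ℝ] E} (hT : (T : E →ₗ[ℝ] E).IsSymmetric) {N : Set E}
    {r : ℝ≥0} (hNs : N ⊆ sphere 0 1) (hN : IsCover r (sphere 0 1) N) {m : ℝ} (hm₀ : 0 ≤ m)
    (hm : ∀ p ∈ N, |⟪T p, p⟫_ℝ| ≤ m) : (1 - 2 * r) * ‖T‖ ≤ m := by
  have hquad (x : E) (hx : ‖x‖ = 1) : |⟪T x, x⟫_ℝ| ≤ m + 2 * r * ‖T‖ := by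
    obtain ⟨p, hp, hxp⟩ := hN (mem_sphere_zero_iff_norm.mpr hx)
    replace hxp : edist x p ≤ r := hxp
    rw [edist_le_coe, ← NNReal.coe_le_coe, coe_nndist, dist_eq_norm] at hxp
    have hp1 : ‖p‖ = 1 := mem_sphere_zero_iff_norm.mp (hNs hp)
    have hdiff : ⟪T x, x⟫_ℝ - ⟪T p, p⟫_ℝ = ⟪T (x - p), x + p⟫_ℝ := by
      have hswap : ⟪T x, p⟫_ℝ = ⟪T p, x⟫_ℝ := by rw [← real_inner_comm (T p) x]; exact hT x p
      simp only [map_sub, inner_sub_left, inner_add_right, hswap]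
      ring
    have hsum : ‖x + p‖ ≤ 2 := (norm_add_le x p).trans (by rw [hx, hp1]; norm_num)
    have := abs_sub_abs_le_abs_sub ⟪T x, x⟫_ℝ ⟪T p, p⟫_ℝ
    rw [hdiff] at this
    calc |⟪T x, x⟫_ℝ| ≤ |⟪T p, p⟫_ℝ| + |⟪T (x - p), x + p⟫_ℝ| := by linarith
      _ ≤ m + ‖T‖ * r * 2 := by
        gcongr
        · exact hm p hp
        · exact (abs_real_inner_le_norm _ _).trans <| (mul_le_mul_of_nonneg_right (T.le_opNorm _)
            (norm_nonneg _)).trans (by gcongr)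
      _ = m + 2 * r * ‖T‖ := by ring
  suffices ‖T‖ ≤ m + 2 * r * ‖T‖ by linarith
  rw [T.norm_eq_iSup_rayleighQuotient hT]
  refine ciSup_le fun x => ?_
  rw [← T.norm_eq_iSup_rayleighQuotient hT]
  rcases eq_or_ne x 0 with rfl | hx
  · simp only [rayleighQuotient_apply_zero, abs_zero]
    positivity
  have hu : ‖‖x‖⁻¹ • x‖ = 1 := by
    rw [norm_smul, norm_inv, norm_norm, inv_mul_cancel₀ (norm_ne_zero_iff.mpr hx)]
  rw [← T.rayleigh_smul x (inv_ne_zero (norm_ne_zero_iff.mpr hx)), rayleighQuotient,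
    reApplyInnerSelf_apply, hu]
  simpa using hquad _ hu

theorem abs_norm_sq_sub_one_le_of_isCover [CompleteSpace E] [CompleteSpace F] (L : E →L[ℝ] F)
    {N : Set E} {r : ℝ≥0} (hr : 2 * r < 1) (hNs : N ⊆ sphere 0 1) (hN : IsCover r (sphere 0 1) N)
    {m : ℝ} (hm : ∀ p ∈ N, |‖L p‖ ^ 2 - 1| ≤ m) {y : E} (hy : ‖y‖ = 1) :
    |‖L y‖ ^ 2 - 1| ≤ m / (1 - 2 * r) := by
  set T : E →L[ℝ] E := adjoint L ∘L L - ContinuousLinearMap.id ℝ E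
  have hT (x : E) : ⟪T x, x⟫_ℝ = ‖L x‖ ^ 2 - ‖x‖ ^ 2 := by
    simp [T, inner_sub_left, adjoint_inner_left]
  have hTsymm : (T : E →ₗ[ℝ] E).IsSymmetric := fun x z => by
    simp [T, inner_sub_left, inner_sub_right, adjoint_inner_left, adjoint_inner_right]
  have hm₀ : 0 ≤ m := by
    obtain ⟨p, hp, -⟩ := hN (mem_sphere_zero_iff_norm.mpr hy)
    exact (abs_nonneg _).trans (hm p hp)
  have hnorm := opNorm_le_of_isCover hTsymm hNs hN hm₀ fun p hp => by
    simpa [hT, mem_sphere_zero_iff_norm.mp (hNs hp)] using hm p hp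
  have hTy : |‖L y‖ ^ 2 - 1| ≤ ‖T‖ :=
    calc |‖L y‖ ^ 2 - 1| = |⟪T y, y⟫_ℝ| := by rw [hT, hy, one_pow]
      _ ≤ ‖T y‖ * ‖y‖ := abs_real_inner_le_norm _ _
      _ ≤ ‖T‖ := by simpa [hy] using T.le_opNorm y
  rw [le_div_iff₀ (by linarith)]
  nlinarith [abs_nonneg (‖L y‖ ^ 2 - 1)]

end ApproximateIsometry

lemma abs_one_sub_sqrt_le (x : ℝ) : |1 - √x| ≤ |x - 1| := by
  rcases le_total x 0 with hx | hx
  · rw [sqrt_eq_zero'.mpr hx, abs_of_nonpos (show x - 1 ≤ 0 by linarith)]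
    norm_num
    linarith
  · have h := sq_sqrt hx
    have hs := sqrt_nonneg x
    rw [abs_le]
    constructor <;> cases abs_cases (x - 1) <;> nlinarith

open Matrix in
theorem abs_one_sub_singVals_le {k t : ℕ} (M : Matrix (Fin k) (Fin t) ℝ) {ε : ℝ}
    (h : ∀ y : EuclideanSpace ℝ (Fin k), ‖y‖ = 1 → |‖toEuclideanLin Mᵀ y‖ ^ 2 - 1| ≤ ε)
    (i : Fin k) : |1 - singVals M i| ≤ ε := by
  set hB := isHermitian_mul_conjTranspose_self M
  have hquad (u : EuclideanSpace ℝ (Fin k)) :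
      RCLike.re (star u.ofLp ⬝ᵥ (M * Mᴴ) *ᵥ u.ofLp) = ‖toEuclideanLin Mᵀ u‖ ^ 2 := by
    rw [EuclideanSpace.real_norm_sq_eq, ← mulVec_mulVec, dotProduct_mulVec, ← mulVec_transpose,
      conjTranspose_eq_transpose_of_trivial]
    simp [dotProduct, sq]
  have heig := hB.eigenvalues_eq i
  rw [hquad] at heig
  exact (abs_one_sub_sqrt_le _).trans (heig ▸ h _ (hB.eigenvectorBasis.orthonormal.1 i))

section SignMatrix

open Matrix Metric
open scoped NNReal

lemma sum_mulVec_sq_eq_norm_sq {d k : ℕ} {V : Matrix (Fin d) (Fin k) ℝ} (hV : Vᵀ * V = 1)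
    (y : EuclideanSpace ℝ (Fin k)) : ∑ i, (V *ᵥ y.ofLp) i ^ 2 = ‖y‖ ^ 2 := by
  rw [EuclideanSpace.real_norm_sq_eq]
  simpa [dotProduct, sq, dotProduct_mulVec, ← mulVec_transpose, hV] using
    dotProduct_mulVec (V *ᵥ y.ofLp) V y.ofLp

lemma norm_sq_toEuclideanLin_transpose_mul_signMatrix {d k t : ℕ} (V : Matrix (Fin d) (Fin k) ℝ)
    (ω : Fin d → Fin t → Bool) (y : EuclideanSpace ℝ (Fin k)) :
    ‖toEuclideanLin (Vᵀ * signMatrix d t ω)ᵀ y‖ ^ 2 =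
      (∑ j, rademacherSum (V *ᵥ y.ofLp) (Function.swap ω j) ^ 2) / t := by
  rw [EuclideanSpace.real_norm_sq_eq, sum_div]
  refine sum_congr rfl fun j _ => ?_
  have : ((Vᵀ * signMatrix d t ω)ᵀ *ᵥ y.ofLp) j =
      rademacherSum (V *ᵥ y.ofLp) (Function.swap ω j) / √t := by
    rw [transpose_mul, transpose_transpose, ← mulVec_mulVec, mulVec_transpose]
    simp only [vecMul, dotProduct, signMatrix, of_apply, rademacherSum, Function.swap, boolSign,
      sum_div, mul_div_assoc]
  change ((Vᵀ * signMatrix d t ω)ᵀ *ᵥ y.ofLp) j ^ 2 = _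
  rw [this, div_pow, sq_sqrt (Nat.cast_nonneg t)]

theorem abs_one_sub_singVals_le_of_isCover {d k t : ℕ} (ht : 0 < t) (V : Matrix (Fin d) (Fin k) ℝ)
    {N : Set (EuclideanSpace ℝ (Fin k))} (hNs : N ⊆ sphere 0 1)
    (hN : IsCover (1 / 4) (sphere 0 1) N)
    {ε : ℝ} {ω : Fin d → Fin t → Bool}
    (hω : ∀ p ∈ N, |∑ j, (rademacherSum (V *ᵥ p.ofLp) (Function.swap ω j) ^ 2 - 1)| ≤ t * (ε / 2))
    (i : Fin k) : |1 - singVals (Vᵀ * signMatrix d t ω) i| ≤ ε := by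
  refine abs_one_sub_singVals_le _ (fun y hy => ?_) i
  have h := abs_norm_sq_sub_one_le_of_isCover (LinearMap.toContinuousLinearMap
    (toEuclideanLin (Vᵀ * signMatrix d t ω)ᵀ)) (by norm_num) hNs hN (m := ε / 2) (fun p hp => ?_) hy
  · rwa [show ε / 2 / (1 - 2 * ((1 / 4 : ℝ≥0) : ℝ)) = ε by push_cast; ring] at h
  have htR : (0 : ℝ) < t := Nat.cast_pos.mpr ht
  simp only [LinearMap.coe_toContinuousLinearMap', norm_sq_toEuclideanLin_transpose_mul_signMatrix]
  rw [div_sub_one htR.ne', abs_div, abs_of_pos htR, div_le_iff₀' htR]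
  simpa [sum_sub_distrib] using hω p hp

theorem signMeasure_exists_mem_le {d k t : ℕ} {V : Matrix (Fin d) (Fin k) ℝ} (hV : Vᵀ * V = 1)
    {N : Finset (EuclideanSpace ℝ (Fin k))}
    (hNs : (N : Set (EuclideanSpace ℝ (Fin k))) ⊆ sphere 0 1)
    {δ : ℝ} (hδ : 0 ≤ δ) (hδ' : δ ≤ 12) :
    signMeasure d t {ω | ∃ p ∈ N,
        t * δ ≤ |∑ j, (rademacherSum (V *ᵥ p.ofLp) (Function.swap ω j) ^ 2 - 1)|} ≤
      ENNReal.ofReal (#N * (2 * exp (-(t * δ ^ 2) / 144))) := by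
  calc signMeasure d t {ω | ∃ p ∈ N,
          t * δ ≤ |∑ j, (rademacherSum (V *ᵥ p.ofLp) (Function.swap ω j) ^ 2 - 1)|}
      ≤ ∑ p ∈ N, signMeasure d t
          {ω | t * δ ≤ |∑ j, (rademacherSum (V *ᵥ p.ofLp) (Function.swap ω j) ^ 2 - 1)|} := by
        refine (measure_mono ?_).trans (measure_biUnion_finset_le N _)
        rintro ω ⟨p, hp, h⟩
        exact Set.mem_biUnion hp h
    _ ≤ ∑ p ∈ N, ENNReal.ofReal (2 * exp (-(t * δ ^ 2) / 144)) := by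
        refine sum_le_sum fun p hp => signMeasure_abs_sum_sq_sub_one_ge_le ?_ hδ hδ'
        rw [sum_mulVec_sq_eq_norm_sq hV, mem_sphere_zero_iff_norm.mp (hNs hp), one_pow]
    _ = ENNReal.ofReal (#N * (2 * exp (-(t * δ ^ 2) / 144))) := by
        rw [sum_const, nsmul_eq_mul, ← ENNReal.ofReal_natCast, ← ENNReal.ofReal_mul (by positivity)]

lemma nine_pow_mul_exp_le {k : ℕ} (hk : 1 ≤ k) {x : ℝ} (hx : 11 * k ≤ x) :
    9 ^ k * (2 * exp (-x)) ≤ 0.01 := by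
  have he : (2 : ℝ) ^ 11 ≤ exp 11 := by
    have := pow_le_pow_left₀ (by norm_num : (0 : ℝ) ≤ 2)
      (show (2 : ℝ) ≤ exp 1 by linarith [add_one_le_exp (1 : ℝ)]) 11
    rwa [exp_one_pow, Nat.cast_ofNat] at this
  have hq : 9 * exp (-11) ≤ 9 / 2 ^ 11 := by
    rw [Real.exp_neg, ← div_eq_mul_inv]
    exact div_le_div_of_nonneg_left (by norm_num) (by positivity) he
  calc 9 ^ k * (2 * exp (-x)) ≤ 9 ^ k * (2 * exp (-11) ^ k) := by
        rw [← exp_nat_mul]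
        gcongr
        linarith
    _ = 2 * (9 * exp (-11)) ^ k := by ring
    _ ≤ 2 * (9 * exp (-11)) ^ 1 :=
        mul_le_mul_of_nonneg_left (pow_le_pow_of_le_one (by positivity) (hq.trans (by norm_num)) hk)
          (by norm_num)
    _ ≤ 0.01 := by linarith

end SignMatrix

/-- singular value preservation under random sign projection. -/
theorem statement16 :
    ∃ c : ℝ, 0 < c ∧
      ∀ (ε : ℝ), 0 < ε → ε < 1 / 3 →
        ∀ (k : ℕ), 1 ≤ k →
          ∀ (d t : ℕ) (V : Matrix (Fin d) (Fin k) ℝ), Vᵀ * V = 1 →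
            c * k / ε ^ 2 ≤ (t : ℝ) →
            ENNReal.ofReal 0.99 ≤ signMeasure d t
              {ω | ∀ i : Fin k, |1 - singVals (Vᵀ * signMatrix d t ω) i| ≤ ε} := by
  refine ⟨6336, by norm_num, fun ε hε hε3 k hk d t V hV ht => ?_⟩
  rw [div_le_iff₀ (by positivity)] at ht
  have htpos : 0 < t := by
    have : (1 : ℝ) ≤ k := by exact_mod_cast hk
    exact_mod_cast pos_of_mul_pos_left (by linarith : (0 : ℝ) < t * ε ^ 2) (sq_nonneg ε)
  have : NeZero k := ⟨by omega⟩
  obtain ⟨N, hNs, hNcard, hN⟩ :=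
    exists_finset_isCover_sphere (E := EuclideanSpace ℝ (Fin k)) (r := 1 / 4) (by norm_num)
  rw [finrank_euclideanSpace_fin, show 1 + 2 / ((1 / 4 : NNReal) : ℝ) = 9 by norm_num] at hNcard
  have : IsProbabilityMeasure (signMeasure d t) := PMF.toMeasure.isProbabilityMeasure _
  rw [show (0.99 : ℝ) = 1 - 0.01 by norm_num]
  refine ofReal_one_sub_le_of_measure_compl_le (Set.toFinite _).measurableSet (by norm_num) ?_
  calc _ ≤ signMeasure d t {ω | ∃ p ∈ N,
          t * (ε / 2) ≤ |∑ j, (rademacherSum (V *ᵥ p.ofLp) (Function.swap ω j) ^ 2 - 1)|} :=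
        measure_mono fun ω hω => by
          by_contra h
          simp only [Set.mem_ofPred_eq, not_exists, not_and, not_le] at h
          exact hω fun i =>
            abs_one_sub_singVals_le_of_isCover htpos V hNs hN (fun p hp => (h p hp).le) i
    _ ≤ ENNReal.ofReal (#N * (2 * exp (-(t * (ε / 2) ^ 2) / 144))) :=
        signMeasure_exists_mem_le hV hNs (by positivity) (by linarith)
    _ ≤ ENNReal.ofReal 0.01 := by
        refine ENNReal.ofReal_le_ofReal <|
          (mul_le_mul_of_nonneg_right hNcard (by positivity)).trans ?_
        -- `6336 = 11 * 576`: the Chernoff exponent `t (ε/2)² / 144` is at least `11 k`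
        rw [neg_div]
        exact nine_pow_mul_exp_le hk (by linarith)
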